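/- With (ζ, γ*) a partially admissible mapping system for B ⊆ H and ζ̄* the convolution inverse of ζ* : B* → H*, the map S⁻¹ ∘ ζ̄* : B* → H* is a right B*-comodule map: for all b* ∈ B*, Σ S⁻¹(ζ̄*(b*₍₁₎)) ⊗ b*₍₂₎ = Σ S⁻¹(ζ̄*(b*))₍₁₎ ⊗ ι*(S⁻¹(ζ̄*(b*))₍₂₎) in H* ⊗ B*. -/

import Mathlib

/-!
STATEMENT 12: With (ζ, γ*) a partially admissible mapping system for B ⊆ H (H a
finite-dimensional Hopf algebra with bijective antipode S) and ζ̄* the convolution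
inverse of ζ* : B* → H*, the map S⁻¹ ∘ ζ̄* : B* → H* is a right B*-comodule map:
for all b* ∈ B*,
  Σ S⁻¹(ζ̄*(b*₍₁₎)) ⊗ b*₍₂₎ = Σ S⁻¹(ζ̄*(b*))₍₁₎ ⊗ ι*(S⁻¹(ζ̄*(b*))₍₂₎)  in H* ⊗ B*.

The quotient H/B⁺H is modelled by the coalgebra C.  Dual structures are unfolded:
ζ̄* = (ζ̄)ᵀ, ι* = ιᵀ, S⁻¹ on H* is (S⁻¹)ᵀ; the comultiplication of B* is dual to the
multiplication of B, and the right B*-comodule structure of H* is dual to the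
multiplication H ⊗ B → H.  Pairing both sides of the identity in H* ⊗ B* against
a ⊗ c ∈ H ⊗ B (a faithful pairing, H and B being finite dimensional) yields:
  b*( ζ̄(S⁻¹(a)) * c ) = b*( ζ̄(S⁻¹(a * ι(c))) )   for all b* ∈ B*, a ∈ H, c ∈ B.
-/

open TensorProduct

noncomputable def convMap (k : Type*) {H M : Type*} [CommSemiring k]
    [AddCommMonoid H] [Module k H] [Coalgebra k H] [Semiring M] [Algebra k M]
    (f g : H →ₗ[k] M) : H →ₗ[k] M :=
  LinearMap.mul' k M ∘ₗ TensorProduct.map f g ∘ₗ Coalgebra.comul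

/-!
Write `Z := ι ∘ ζ̄`. In the convolution algebra `Z * (ι ∘ ζ) = 1` and `(ι ∘ ζ) * (γ ∘ π) = id`,
so `Z = Z * (id * S) = (γ ∘ π) * S`. For `c ∈ B` the coideal property gives `δ c = c₁ ⊗ c₂` with
`c₂ ∈ B`, and `δ (S⁻¹ c) = S⁻¹ c₂ ⊗ S⁻¹ c₁`. Since `π` vanishes on `B⁺H` and `c₂ S⁻¹ c₁` sums to
`ε c`, we get `π (S⁻¹ c₂ * h) = ε c₂ • π h`; expanding `Z (S⁻¹ c * x)` by Sweedler's notation then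
yields `Z (S⁻¹ c * x) = Z x * c`, which for `x = S⁻¹ a` is the claim because
`S⁻¹ (a c) = S⁻¹ c S⁻¹ a`.
-/

open Coalgebra HopfAlgebra WithConv
open Algebra.TensorProduct (includeLeft includeRight)

lemma toConv_convMap {k C A : Type*} [CommSemiring k] [AddCommMonoid C] [Module k C]
    [Coalgebra k C] [Semiring A] [Algebra k A] (f g : C →ₗ[k] A) :
    toConv (convMap k f g) = toConv f * toConv g :=
  rfl

lemma Coalgebra.sum_counit_right_smul {k A ι : Type*} [CommSemiring k] [AddCommMonoid A]
    [Module k A] [Coalgebra k A] {a : A} (r : Repr k a ι) :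
    ∑ i ∈ r.index, counit (R := k) (r.right i) • r.left i = a := by
  simpa only [map_sum, rid_tmul, one_smul] using
    congr(_root_.TensorProduct.rid k A $(sum_tmul_counit_eq r))

lemma LinearMap.toConv_algHom_comp_mul_eq_one {k C A A' : Type*} [CommSemiring k]
    [AddCommMonoid C] [Module k C] [Coalgebra k C] [Semiring A] [Algebra k A] [Semiring A']
    [Algebra k A'] (φ : A →ₐ[k] A') {f g : C →ₗ[k] A} (h : toConv f * toConv g = 1) :
    toConv (φ.toLinearMap ∘ₗ f) * toConv (φ.toLinearMap ∘ₗ g) = 1 := by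
  apply WithConv.ext
  rw [← LinearMap.algHom_comp_convMul_distrib, h]
  ext
  simp

namespace HopfAlgebra

section Antipode

variable {k H : Type*} [CommSemiring k] [Semiring H] [HopfAlgebra k H]

lemma toConv_comul_eq_includeLeft_mul_includeRight :
    toConv (comul : H →ₗ[k] H ⊗[k] H) =
      toConv (includeLeft : H →ₐ[k] H ⊗[k] H).toLinearMap * toConv includeRight.toLinearMap := by
  ext x
  rw [(ℛ k x).convMul_apply, ← (ℛ k x).eq]
  simp [Algebra.TensorProduct.tmul_mul_tmul]

lemma toConv_map_antipode_comm_comul :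
    toConv (map (antipode k) (antipode k) ∘ₗ (TensorProduct.comm k H H).toLinearMap ∘ₗ comul) =
      toConv ((includeRight : H →ₐ[k] H ⊗[k] H).toLinearMap ∘ₗ antipode k) *
        toConv ((includeLeft : H →ₐ[k] H ⊗[k] H).toLinearMap ∘ₗ antipode k) := by
  ext x
  rw [(ℛ k x).convMul_apply]
  simp [← (ℛ k x).eq, Algebra.TensorProduct.tmul_mul_tmul]

lemma toConv_algHom_comp_antipode_mul_self {A : Type*} [Semiring A] [Algebra k A]
    (φ : H →ₐ[k] A) : toConv (φ.toLinearMap ∘ₗ antipode k) * toConv φ.toLinearMap = 1 := by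
  simpa using LinearMap.toConv_algHom_comp_mul_eq_one φ LinearMap.antipode_mul_id

/-- In the convolution monoid, `(S ⊗ S) ∘ τ ∘ δ` is a left and `δ ∘ S` a right inverse of `δ`. -/
lemma comul_comp_antipode :
    comul ∘ₗ antipode k = map (antipode k) (antipode k) ∘ₗ
      (TensorProduct.comm k H H).toLinearMap ∘ₗ comul (R := k) (A := H) := by
  have hleft : toConv (map (antipode k) (antipode k) ∘ₗ
      (TensorProduct.comm k H H).toLinearMap ∘ₗ comul) * toConv (comul : H →ₗ[k] H ⊗[k] H) = 1 := by
    rw [toConv_map_antipode_comm_comul, toConv_comul_eq_includeLeft_mul_includeRight, mul_assoc,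
      ← mul_assoc (toConv (includeLeft.toLinearMap ∘ₗ _)), toConv_algHom_comp_antipode_mul_self,
      one_mul, toConv_algHom_comp_antipode_mul_self]
  exact congrArg ofConv (left_inv_eq_right_inv hleft LinearMap.comul_right_inv).symm

lemma eq_mul_toConv_antipode {u v w : WithConv (H →ₗ[k] H)} (huv : u * v = 1)
    (hvw : v * w = toConv LinearMap.id) : u = w * toConv (antipode k) := by
  calc u = u * (toConv LinearMap.id * toConv (antipode k)) := by
          rw [LinearMap.id_mul_antipode, mul_one]
    _ = w * toConv (antipode k) := by rw [← hvw, ← mul_assoc, ← mul_assoc, huv, one_mul]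

end Antipode

section AntipodeInv

variable {k H : Type*} [CommSemiring k] [Semiring H] [HopfAlgebra k H] {Sinv : H →ₗ[k] H}

lemma antipodeInv_mul (hS₁ : Sinv ∘ₗ antipode k = LinearMap.id)
    (hS₂ : antipode k ∘ₗ Sinv = LinearMap.id) (a b : H) : Sinv (a * b) = Sinv b * Sinv a := by
  have h₁ : ∀ x, Sinv (antipode k x) = x := LinearMap.congr_fun hS₁
  have h₂ : ∀ x, antipode k (Sinv x) = x := LinearMap.congr_fun hS₂
  conv_lhs => rw [← h₂ a, ← h₂ b, ← antipode_mul_antidistrib, h₁]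

lemma comul_antipodeInv (hS₁ : Sinv ∘ₗ antipode k = LinearMap.id)
    (hS₂ : antipode k ∘ₗ Sinv = LinearMap.id) (x : H) :
    comul (R := k) (Sinv x) = map Sinv Sinv (TensorProduct.comm k H H (comul x)) := by
  have h₁ : ∀ x, Sinv (antipode k x) = x := LinearMap.congr_fun hS₁
  have h₂ : ∀ x, antipode k (Sinv x) = x := LinearMap.congr_fun hS₂
  have hinv : ∀ t : H ⊗[k] H, map Sinv Sinv (TensorProduct.comm k H H
      (map (antipode k) (antipode k) (TensorProduct.comm k H H t))) = t := fun t => by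
    induction t using TensorProduct.induction_on with
    | zero => simp
    | tmul => simp [h₁]
    | add _ _ h h' => simp [h, h']
  conv_rhs => rw [← h₂ x, ← LinearMap.comp_apply (comul (R := k)), comul_comp_antipode]
  exact (hinv _).symm

lemma sum_right_mul_antipodeInv_left (hS₁ : Sinv ∘ₗ antipode k = LinearMap.id)
    (hS₂ : antipode k ∘ₗ Sinv = LinearMap.id) {x : H} {ι : Type*} (r : Repr k x ι) :
    ∑ i ∈ r.index, r.right i * Sinv (r.left i) = counit (R := k) x • 1 := by
  have h₂ : ∀ x, antipode k (Sinv x) = x := LinearMap.congr_fun hS₂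
  apply Function.LeftInverse.injective (g := Sinv) (LinearMap.congr_fun hS₁)
  simp only [map_sum, antipode_mul_antidistrib, h₂, map_smul, antipode_one]
  exact sum_mul_antipode_eq_smul r

@[simps]
def _root_.Coalgebra.Repr.antipodeInv (hS₁ : Sinv ∘ₗ antipode k = LinearMap.id)
    (hS₂ : antipode k ∘ₗ Sinv = LinearMap.id) {x : H} {ι : Type*} (r : Repr k x ι) :
    Repr k (Sinv x) ι where
  index := r.index
  left i := Sinv (r.right i)
  right i := Sinv (r.left i)
  eq := by simp [comul_antipodeInv hS₁ hS₂, ← r.eq]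

end AntipodeInv

end HopfAlgebra

section LeftCoideal

variable {k H C : Type*} [CommRing k] [Ring H] [HopfAlgebra k H] [AddCommGroup C] [Module k C]
  {B : Subalgebra k H} {π : H →ₗ[k] C}

def Subalgebra.IsLeftCoideal (B : Subalgebra k H) : Prop :=
  ∀ b : B, comul (b : H) ∈
    LinearMap.range (TensorProduct.map (LinearMap.id : H →ₗ[k] H) B.val.toLinearMap)

lemma Subalgebra.IsLeftCoideal.exists_repr (hB : B.IsLeftCoideal) (c : B) :
    ∃ r : Repr k (c : H) (H × B), ∀ i, r.right i ∈ B := by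
  obtain ⟨t, ht⟩ := hB c
  obtain ⟨s, hs⟩ := TensorProduct.exists_finset (R := k) t
  refine ⟨⟨s, Prod.fst, fun i => i.2, ?_⟩, fun i => i.2.2⟩
  simp [← ht, hs, map_sum]

lemma map_mul_eq_counit_smul_of_mem (hπ : ∀ b ∈ B, counit (R := k) b = 0 → ∀ h, π (b * h) = 0)
    {b : H} (hb : b ∈ B) (h : H) : π (b * h) = counit (R := k) b • π h := by
  have := hπ (b - algebraMap k H (counit b)) (sub_mem hb (B.algebraMap_mem _)) (by simp) h
  rwa [sub_mul, map_sub, sub_eq_zero, Algebra.algebraMap_eq_smul_one, smul_mul_assoc, one_mul,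
    map_smul] at this

lemma map_antipodeInv_mul (hB : B.IsLeftCoideal)
    (hπ : ∀ b ∈ B, counit (R := k) b = 0 → ∀ h, π (b * h) = 0)
    {Sinv : H →ₗ[k] H} (hS₁ : Sinv ∘ₗ antipode k = LinearMap.id)
    (hS₂ : antipode k ∘ₗ Sinv = LinearMap.id) (y : B) (h : H) :
    π (Sinv y * h) = counit (R := k) (y : H) • π h := by
  obtain ⟨r, hr⟩ := hB.exists_repr y
  calc π (Sinv y * h)
      = ∑ i ∈ r.index, counit (R := k) (r.right i) • π (Sinv (r.left i) * h) := by
        conv_lhs => rw [← Coalgebra.sum_counit_right_smul r]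
        simp only [map_sum, map_smul, Finset.sum_mul, smul_mul_assoc]
    _ = π ((∑ i ∈ r.index, r.right i * Sinv (r.left i)) * h) := by
        simp only [Finset.sum_mul, map_sum, mul_assoc, map_mul_eq_counit_smul_of_mem hπ (hr _)]
    _ = counit (R := k) (y : H) • π h := by
        rw [sum_right_mul_antipodeInv_left hS₁ hS₂, smul_mul_assoc, one_mul, map_smul]

lemma convMul_antipode_apply_antipodeInv_mul (hB : B.IsLeftCoideal)
    (hπ : ∀ b ∈ B, counit (R := k) b = 0 → ∀ h, π (b * h) = 0)
    {Sinv : H →ₗ[k] H} (hS₁ : Sinv ∘ₗ antipode k = LinearMap.id)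
    (hS₂ : antipode k ∘ₗ Sinv = LinearMap.id) (φ : C →ₗ[k] H) (c : B) (x : H) :
    (toConv (φ ∘ₗ π) * toConv (antipode k) : WithConv (H →ₗ[k] H)) (Sinv c * x) =
      (toConv (φ ∘ₗ π) * toConv (antipode k) : WithConv (H →ₗ[k] H)) x * c := by
  obtain ⟨r, hr⟩ := hB.exists_repr c
  have h₂ : ∀ x, antipode k (Sinv x) = x := LinearMap.congr_fun hS₂
  rw [((r.antipodeInv hS₁ hS₂).mul (ℛ k x)).convMul_apply, (ℛ k x).convMul_apply]
  conv_rhs => rw [← Coalgebra.sum_counit_right_smul r]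
  simp only [Repr.mul_index, Repr.mul_left, Repr.mul_right, Repr.antipodeInv_index,
    Repr.antipodeInv_left, Repr.antipodeInv_right, Finset.sum_product, Finset.sum_mul_sum]
  rw [Finset.sum_comm]
  refine Finset.sum_congr rfl fun j _ => Finset.sum_congr rfl fun i _ => ?_
  simp only [LinearMap.comp_apply, map_antipodeInv_mul hB hπ hS₁ hS₂ ⟨_, hr i⟩, map_smul,
    antipode_mul_antidistrib, h₂, smul_mul_assoc, mul_smul_comm, mul_assoc]

end LeftCoideal

theorem stmt12_general {k H C : Type*} [Field k] [Ring H] [HopfAlgebra k H]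
    [AddCommGroup C] [Module k C]
    (B : Subalgebra k H)
    -- B is a left coideal subalgebra: Δ(B) ⊆ H ⊗ B
    (hB : ∀ b : B, Coalgebra.comul (b : H) ∈
      LinearMap.range (TensorProduct.map (LinearMap.id : H →ₗ[k] H) B.val.toLinearMap))
    -- π : H → C = H/B⁺H, the quotient map of right H-module coalgebras
    (π : H →ₗ[k] C)
    (hπker : LinearMap.ker π = Submodule.span k
      {z : H | ∃ b ∈ B, ∃ h : H, Coalgebra.counit (R := k) b = 0 ∧ z = b * h})
    -- the partially admissible mapping system (ζ, γ*):
    (ζ ζbar : H →ₗ[k] B) (γ : C →ₗ[k] H)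
    -- ζ̄ is the convolution inverse of ζ
    (hζinv₂ : convMap k ζbar ζ =
      (Algebra.linearMap k B) ∘ₗ (Coalgebra.counit : H →ₗ[k] k))
    -- (ι∘ζ) ∗ (γ∘π) = id_H
    (hmain : LinearMap.mul' k H ∘ₗ
        TensorProduct.map (B.val.toLinearMap ∘ₗ ζ) (γ ∘ₗ π) ∘ₗ Coalgebra.comul
      = LinearMap.id)
    -- the antipode is bijective, with inverse Sinv
    (Sinv : H →ₗ[k] H)
    (hS₁ : Sinv ∘ₗ HopfAlgebra.antipode (R := k) = LinearMap.id)
    (hS₂ : HopfAlgebra.antipode (R := k) ∘ₗ Sinv = LinearMap.id) :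
    ∀ (bs : Module.Dual k B) (a : H) (c : B),
      bs (ζbar (Sinv a) * c) = bs (ζbar (Sinv (a * (c : H)))) := by
  intro bs a c
  have hZ : toConv (B.val.toLinearMap ∘ₗ ζbar) = toConv (γ ∘ₗ π) * toConv (antipode k) :=
    HopfAlgebra.eq_mul_toConv_antipode
      (LinearMap.toConv_algHom_comp_mul_eq_one B.val (by rw [← toConv_convMap, hζinv₂]; rfl))
      (congrArg toConv hmain)
  have hπ : ∀ b ∈ B, Coalgebra.counit (R := k) b = 0 → ∀ h, π (b * h) = 0 := by
    intro b hb hb₀ h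
    rw [← LinearMap.mem_ker, hπker]
    exact Submodule.subset_span ⟨b, hb, h, hb₀, rfl⟩
  have key := convMul_antipode_apply_antipodeInv_mul hB hπ hS₁ hS₂ γ c (Sinv a)
  rw [← hZ, ← HopfAlgebra.antipodeInv_mul hS₁ hS₂] at key
  congr 1
  exact Subtype.ext (by simpa using key.symm)

theorem stmt12 {k H C : Type*} [Field k] [Ring H] [HopfAlgebra k H] [FiniteDimensional k H]
    [AddCommGroup C] [Module k C] [Coalgebra k C]
    (B : Subalgebra k H)
    -- B is a left coideal subalgebra: Δ(B) ⊆ H ⊗ B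
    (hB : ∀ b : B, Coalgebra.comul (b : H) ∈
      LinearMap.range (TensorProduct.map (LinearMap.id : H →ₗ[k] H) B.val.toLinearMap))
    -- π : H → C = H/B⁺H, the quotient map of right H-module coalgebras
    (π : H →ₗ[k] C) (hπsurj : Function.Surjective π)
    (hπcounit : (Coalgebra.counit : C →ₗ[k] k) ∘ₗ π = Coalgebra.counit)
    (hπcomul : Coalgebra.comul ∘ₗ π = (TensorProduct.map π π) ∘ₗ Coalgebra.comul)
    (hπker : LinearMap.ker π = Submodule.span k
      {z : H | ∃ b ∈ B, ∃ h : H, Coalgebra.counit (R := k) b = 0 ∧ z = b * h})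
    -- the right H-action ⊲ on C, for which π is a right H-module map
    (act : C ⊗[k] H →ₗ[k] C)
    (hact : ∀ a h : H, act (π a ⊗ₜ[k] h) = π (a * h))
    -- the partially admissible mapping system (ζ, γ*):
    (ζ ζbar : H →ₗ[k] B) (γ γbar : C →ₗ[k] H)
    -- ζ is a biunitary left B-module map
    (hζmod : ∀ (b : B) (h : H), ζ ((b : H) * h) = b * ζ h)
    (hζ1 : ζ 1 = 1)
    (hζε : ∀ h : H, Coalgebra.counit (R := k) ((ζ h : H)) = Coalgebra.counit (R := k) h)
    -- γ is a biunitary right H/B⁺H-comodule map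
    (hγcomod : (TensorProduct.map LinearMap.id π) ∘ₗ Coalgebra.comul ∘ₗ γ
      = (TensorProduct.map γ LinearMap.id) ∘ₗ Coalgebra.comul)
    (hγ1 : γ (π 1) = 1)
    (hγε : ∀ x : C, Coalgebra.counit (R := k) (γ x) = Coalgebra.counit (R := k) x)
    -- ζ̄ is the convolution inverse of ζ
    (hζinv₁ : convMap k ζ ζbar =
      (Algebra.linearMap k B) ∘ₗ (Coalgebra.counit : H →ₗ[k] k))
    (hζinv₂ : convMap k ζbar ζ =
      (Algebra.linearMap k B) ∘ₗ (Coalgebra.counit : H →ₗ[k] k))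
    -- γ̄ is the convolution inverse of γ
    (hγinv₁ : convMap k γ γbar =
      (Algebra.linearMap k H) ∘ₗ (Coalgebra.counit : C →ₗ[k] k))
    (hγinv₂ : convMap k γbar γ =
      (Algebra.linearMap k H) ∘ₗ (Coalgebra.counit : C →ₗ[k] k))
    -- (ι∘ζ) ∗ (γ∘π) = id_H
    (hmain : LinearMap.mul' k H ∘ₗ
        TensorProduct.map (B.val.toLinearMap ∘ₗ ζ) (γ ∘ₗ π) ∘ₗ Coalgebra.comul
      = LinearMap.id)
    -- the antipode is bijective, with inverse Sinv
    (Sinv : H →ₗ[k] H)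
    (hS₁ : Sinv ∘ₗ HopfAlgebra.antipode (R := k) = LinearMap.id)
    (hS₂ : HopfAlgebra.antipode (R := k) ∘ₗ Sinv = LinearMap.id) :
    ∀ (bs : Module.Dual k B) (a : H) (c : B),
      bs (ζbar (Sinv a) * c) = bs (ζbar (Sinv (a * (c : H)))) :=
  stmt12_general B hB π hπker ζ ζbar γ hζinv₂ hmain Sinv hS₁ hS₂
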